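/- arXiv:math/0001089 — 2 statements merged into one kernel-verified Lean document; each statement's English description precedes it below -/
import Mathlib

section
/- With f0,f1,f2,f3 as above and σ the index-shift by one modulo 6, the identity f0·σ(f3) − f3·σ(f0) + f1·σ(f2) − f2·σ(f1) = 0 holds in C[x0,...,x5]. -/
/- STATEMENT 1: With f0,f1,f2,f3 as in C[x0,...,x5] (indices mod 6) and σ the
shift xᵢ ↦ x_{i-1}, one has f0·σ(f3) − f3·σ(f0) + f1·σ(f2) − f2·σ(f1) = 0. -/

open MvPolynomial

noncomputable def sigma6 : MvPolynomial (Fin 6) ℂ →ₐ[ℂ] MvPolynomial (Fin 6) ℂ :=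
  rename (fun i : Fin 6 => i - 1)

noncomputable def f₀ : MvPolynomial (Fin 6) ℂ := X 0 ^ 3 + X 2 ^ 3 + X 4 ^ 3
noncomputable def f₁ : MvPolynomial (Fin 6) ℂ :=
  X 1 ^ 2 * X 4 + X 3 ^ 2 * X 0 + X 5 ^ 2 * X 2
noncomputable def f₂ : MvPolynomial (Fin 6) ℂ :=
  X 1 * X 2 * X 3 + X 3 * X 4 * X 5 + X 5 * X 0 * X 1
noncomputable def f₃ : MvPolynomial (Fin 6) ℂ := X 0 * X 2 * X 4

theorem stmt1 :
    f₀ * sigma6 f₃ - f₃ * sigma6 f₀ + f₁ * sigma6 f₂ - f₂ * sigma6 f₁ = 0 := by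
  simp only [sigma6, f₀, f₁, f₂, f₃, map_add, map_mul, map_pow, rename_X]
  simp only [show ((0:Fin 6)-1)=5 from rfl, show ((1:Fin 6)-1)=0 from rfl,
    show ((2:Fin 6)-1)=1 from rfl, show ((3:Fin 6)-1)=2 from rfl,
    show ((4:Fin 6)-1)=3 from rfl, show ((5:Fin 6)-1)=4 from rfl]
  ring
end

section
/- In C[z0,z1,z2,z3] with parameters w0,w1,w2 (set w3=w1), let D(z,w) = det(A1+A2) with A1 = [[z0 w0, z1 w1],[z1 w1, z2 w0]] and A2 = [[z2 w2, z3 w1],[z3 w1, z0 w2]]. Let σ act by z_i ↦ z_{i−1} (mod 4) and τ by z_i ↦ (√−1)^{−i} z_i. Then the identity (4 w1^4 − 2 w0^3 w2 − 2 w0 w2^3)(z0+z2)^2 + (w0+w2)^2 D + 4 w1^2 σ(D) + (w0−w2)^2 τ(D) = 0 holds. -/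
/- STATEMENT 5: In ℂ[z0,z1,z2,z3] (indices mod 4) with parameters w0,w1,w2
(and w3 = w1), let D = det(A1+A2) = (z0w0+z2w2)(z2w0+z0w2) − ((z1+z3)w1)².
With σ(zᵢ) = z_{i-1} and τ(zᵢ) = i^{-i}·zᵢ (i = √-1 a primitive 4th root of 1),
one has (4w1⁴ − 2w0³w2 − 2w0w2³)(z0+z2)² + (w0+w2)²D + 4w1²σ(D) + (w0−w2)²τ(D) = 0. -/

open MvPolynomial

noncomputable def D5 (w0 w1 w2 : ℂ) : MvPolynomial (ZMod 4) ℂ :=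
  (X 0 * C w0 + X 2 * C w2) * (X 2 * C w0 + X 0 * C w2) - ((X 1 + X 3) * C w1) ^ 2

/-- σ : zᵢ ↦ z_{i-1}. -/
noncomputable def sigma5 : MvPolynomial (ZMod 4) ℂ →ₐ[ℂ] MvPolynomial (ZMod 4) ℂ :=
  rename (fun i : ZMod 4 => i - 1)

/-- τ : zᵢ ↦ i^{-i} zᵢ, where i = √-1. -/
noncomputable def tau5 : MvPolynomial (ZMod 4) ℂ →ₐ[ℂ] MvPolynomial (ZMod 4) ℂ :=
  aeval (fun i : ZMod 4 => C (Complex.I ^ (-(i.val : ℤ))) * X i)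

lemma sig5 (w0 w1 w2 : ℂ) : sigma5 (D5 w0 w1 w2) =
    (X 3 * C w0 + X 1 * C w2) * (X 1 * C w0 + X 3 * C w2) - ((X 0 + X 2) * C w1) ^ 2 := by
  simp only [D5, sigma5, map_add, map_mul, map_sub, map_pow, rename_X, rename_C,
    show (0:ZMod 4) - 1 = 3 from by decide, show (1:ZMod 4) - 1 = 0 from by decide,
    show (2:ZMod 4) - 1 = 1 from by decide, show (3:ZMod 4) - 1 = 2 from by decide]

lemma tauX (j : ZMod 4) : tau5 (X j) = C (Complex.I ^ (-(j.val : ℤ))) * X j := by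
  simp [tau5]

lemma tau5' (w0 w1 w2 : ℂ) : tau5 (D5 w0 w1 w2) =
    (X 0 * C w0 - X 2 * C w2) * (-(X 2 * C w0) + X 0 * C w2) + ((X 1 - X 3) * C w1) ^ 2 := by
  have e2 : Complex.I ^ (-(2:ℤ)) = -1 := by
    rw [zpow_neg, show ((2:ℤ)) = ((2:ℕ):ℤ) from rfl, zpow_natCast, Complex.I_sq]
    norm_num
  have e1 : Complex.I ^ (-(1:ℤ)) = -Complex.I := by
    rw [zpow_neg, zpow_one, Complex.inv_I]
  have e3 : Complex.I ^ (-(3:ℤ)) = Complex.I := by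
    rw [zpow_neg, show ((3:ℤ)) = ((3:ℕ):ℤ) from rfl, zpow_natCast,
      show Complex.I ^ (3:ℕ) = -Complex.I from by rw [pow_succ, Complex.I_sq]; ring,
      inv_neg, Complex.inv_I, neg_neg]
  have h0 : tau5 (X 0) = X 0 := by rw [tauX]; norm_num
  have h1 : tau5 (X 1) = -(C Complex.I * X 1) := by
    rw [tauX, show ((1:ZMod 4).val : ℤ) = 1 from by decide, e1]
    simp
  have h2 : tau5 (X 2) = -X 2 := by
    rw [tauX, show ((2:ZMod 4).val : ℤ) = 2 from by decide, e2]
    simp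
  have h3 : tau5 (X 3) = C Complex.I * X 3 := by
    rw [tauX, show ((3:ZMod 4).val : ℤ) = 3 from by decide, e3]
  have hC : ∀ c : ℂ, tau5 (C c) = C c := fun c => by simp [tau5]
  have hI : (C Complex.I : MvPolynomial (ZMod 4) ℂ) ^ 2 = -1 := by
    rw [← C_pow, Complex.I_sq]
    simp
  simp only [D5, map_add, map_mul, map_sub, map_pow, h0, h1, h2, h3, hC]
  linear_combination (-(X 1 - X 3) ^ 2 * C w1 ^ 2) * hI

theorem stmt5 (w0 w1 w2 : ℂ) :
    C (4 * w1 ^ 4 - 2 * w0 ^ 3 * w2 - 2 * w0 * w2 ^ 3) * (X 0 + X 2) ^ 2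
      + C ((w0 + w2) ^ 2) * D5 w0 w1 w2
      + C (4 * w1 ^ 2) * sigma5 (D5 w0 w1 w2)
      + C ((w0 - w2) ^ 2) * tau5 (D5 w0 w1 w2) = 0 := by
  rw [sig5, tau5', D5]
  simp only [C_sub, C_add, C_mul, C_pow, map_ofNat]
  ring
end
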